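/- arXiv:2202.12822 — 2 statements merged into one kernel-verified Lean document; each statement's English description precedes it below -/
import Mathlib

section
/- Along any solution of the flight dynamics model in the absence of wind shear (Ẇ(t) = 0 for all t), if the drag is strictly positive and the airspeed is strictly positive at some time t, then the specific total energy e(t) = z(t) + V(t)^2/(2g) is strictly decreasing at t, i.e., ė(t) = −D(t)·V(t)/(m·g) < 0; hence without wind gradient the system is dissipative. -/
theorem HasDerivAt.add_sq_div {z V : ℝ → ℝ} {z' V' t : ℝ} (c : ℝ)
    (hz : HasDerivAt z z' t) (hV : HasDerivAt V V' t) :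
    HasDerivAt (fun τ => z τ + V τ ^ 2 / (2 * c)) (z' + V t * V' / c) t :=
  (hz.add ((hV.pow 2).div_const (2 * c))).congr_deriv (by ring)

/-- The gravity term `V sin γ` enters the climb rate and the kinetic energy rate with
opposite signs, so only the drag power remains. -/
theorem energy_rate_eq_neg_drag_power {m g z' V V' D γ : ℝ} (hm : m ≠ 0) (hg : g ≠ 0)
    (hz' : z' = V * Real.sin γ) (hV' : m * V' = -D - m * g * Real.sin γ) :
    z' + V * V' / g = -(D * V) / (m * g) := by
  field_simp
  linear_combination g * m * hz' + V * hV'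

theorem specific_energy_dissipative_without_wind_shear_general
    (m g : ℝ) (hm : 0 < m) (hg : 0 < g)
    (z V γ ψ W D : ℝ → ℝ)
    (hz : Differentiable ℝ z) (hV : Differentiable ℝ V)
    (hzdot : ∀ t, deriv z t = V t * Real.sin (γ t))
    (hVdot : ∀ t, m * deriv V t =
      -D t - m * g * Real.sin (γ t) + m * deriv W t * Real.cos (γ t) * Real.sin (ψ t))
    (hWdot : ∀ t, deriv W t = 0)
    (t : ℝ) (hD : 0 < D t) (hVpos : 0 < V t) :
    deriv (fun τ => z τ + (V τ) ^ 2 / (2 * g)) t = -(D t * V t) / (m * g) ∧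
      deriv (fun τ => z τ + (V τ) ^ 2 / (2 * g)) t < 0 := by
  have hVdot_no_shear : m * deriv V t = -D t - m * g * Real.sin (γ t) := by
    simpa [hWdot t] using hVdot t
  have he : deriv (fun τ => z τ + (V τ) ^ 2 / (2 * g)) t = -(D t * V t) / (m * g) := by
    rw [((hz t).hasDerivAt.add_sq_div g (hV t).hasDerivAt).deriv]
    exact energy_rate_eq_neg_drag_power hm.ne' hg.ne' (hzdot t) hVdot_no_shear
  refine ⟨he, he ▸ ?_⟩
  exact div_neg_of_neg_of_pos (neg_neg_of_pos (mul_pos hD hVpos)) (mul_pos hm hg)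

/-- Without wind shear (`Ẇ ≡ 0`), with positive drag and airspeed at time `t`,
the specific total energy is strictly decreasing at `t`:
`ė(t) = −D(t)·V(t)/(m·g) < 0`. -/
theorem specific_energy_dissipative_without_wind_shear
    (m g : ℝ) (hm : 0 < m) (hg : 0 < g)
    (z V γ ψ W D : ℝ → ℝ)
    (hz : Differentiable ℝ z) (hV : Differentiable ℝ V)
    (hγ : Differentiable ℝ γ) (hψ : Differentiable ℝ ψ)
    (hW : Differentiable ℝ W)
    (hzdot : ∀ t, deriv z t = V t * Real.sin (γ t))
    (hVdot : ∀ t, m * deriv V t =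
      -D t - m * g * Real.sin (γ t) + m * deriv W t * Real.cos (γ t) * Real.sin (ψ t))
    (hWdot : ∀ t, deriv W t = 0)
    (t : ℝ) (hD : 0 < D t) (hVpos : 0 < V t) :
    deriv (fun τ => z τ + (V τ) ^ 2 / (2 * g)) t = -(D t * V t) / (m * g) ∧
      deriv (fun τ => z τ + (V τ) ^ 2 / (2 * g)) t < 0 :=
  specific_energy_dissipative_without_wind_shear_general m g hm hg z V γ ψ W D hz hV hzdot hVdot
    hWdot t hD hVpos
end

section
/- Along any solution of the flight dynamics model with D(t) > 0 and V(t) > 0, if the specific total energy e(t) = z(t) + V(t)^2/(2g) is strictly increasing at time t (ė(t) > 0), then necessarily Ẇ(t)·cos γ(t)·sin ψ(t) > D(t)/m > 0; in particular energy can only be gained in the presence of a nonzero wind shear gradient. -/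
/-! Differentiating `e = z + V²/(2g)` gives `ė = ż + V V̇ / g`. Substituting the equations of
motion, the gravity terms `V sin γ` and `-V sin γ` cancel, leaving
`ė = (V / g) (Ẇ cos γ sin ψ - D / m)`. As `V / g > 0`, `ė > 0` forces `Ẇ cos γ sin ψ > D / m`. -/

noncomputable def specificEnergy (g : ℝ) (z V : ℝ → ℝ) (τ : ℝ) : ℝ :=
  z τ + V τ ^ 2 / (2 * g)

theorem hasDerivAt_specificEnergy {z V : ℝ → ℝ} {z' V' t : ℝ} (g : ℝ)
    (hz : HasDerivAt z z' t) (hV : HasDerivAt V V' t) :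
    HasDerivAt (specificEnergy g z V) (z' + V t * V' / g) t := by
  refine (hz.add ((hV.pow 2).div_const (2 * g))).congr_deriv ?_
  push_cast
  ring

theorem energy_rate_eq_of_flight_equations {m g V s a D z' V' : ℝ} (hm : m ≠ 0) (hg : g ≠ 0)
    (hz' : z' = V * s) (hV' : m * V' = -D - m * g * s + m * a) :
    z' + V * V' / g = V / g * (a - D / m) := by
  have hV'_eq : V' = -D / m - g * s + a := by
    field_simp
    linarith
  rw [hz', hV'_eq]
  field_simp
  ring

theorem energy_gain_requires_wind_shear_general
    (m g : ℝ) (hm : 0 < m) (hg : 0 < g)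
    (z V γ ψ W D : ℝ → ℝ)
    (hz : Differentiable ℝ z) (hV : Differentiable ℝ V)
    (hzdot : ∀ t, deriv z t = V t * Real.sin (γ t))
    (hVdot : ∀ t, m * deriv V t =
      -D t - m * g * Real.sin (γ t) + m * deriv W t * Real.cos (γ t) * Real.sin (ψ t))
    (t : ℝ) (hD : 0 < D t) (hVpos : 0 < V t)
    (hgain : 0 < deriv (fun τ => z τ + (V τ) ^ 2 / (2 * g)) t) :
    deriv W t * Real.cos (γ t) * Real.sin (ψ t) > D t / m ∧ D t / m > 0 := by
  change 0 < deriv (specificEnergy g z V) t at hgain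
  rw [(hasDerivAt_specificEnergy g (hz t).hasDerivAt (hV t).hasDerivAt).deriv,
    energy_rate_eq_of_flight_equations (a := deriv W t * Real.cos (γ t) * Real.sin (ψ t))
      hm.ne' hg.ne' (hzdot t) (by rw [hVdot t]; ring)] at hgain
  exact ⟨sub_pos.mp ((mul_pos_iff_of_pos_left (div_pos hVpos hg)).mp hgain), div_pos hD hm⟩

/-- With `D(t) > 0` and `V(t) > 0`, if the specific total energy is strictly
increasing at `t` then `Ẇ(t)·cos γ(t)·sin ψ(t) > D(t)/m > 0`: energy can only
be gained in the presence of a nonzero wind shear gradient. -/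
theorem energy_gain_requires_wind_shear
    (m g : ℝ) (hm : 0 < m) (hg : 0 < g)
    (z V γ ψ W D : ℝ → ℝ)
    (hz : Differentiable ℝ z) (hV : Differentiable ℝ V)
    (hγ : Differentiable ℝ γ) (hψ : Differentiable ℝ ψ)
    (hW : Differentiable ℝ W)
    (hzdot : ∀ t, deriv z t = V t * Real.sin (γ t))
    (hVdot : ∀ t, m * deriv V t =
      -D t - m * g * Real.sin (γ t) + m * deriv W t * Real.cos (γ t) * Real.sin (ψ t))
    (t : ℝ) (hD : 0 < D t) (hVpos : 0 < V t)
    (hgain : 0 < deriv (fun τ => z τ + (V τ) ^ 2 / (2 * g)) t) :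
    deriv W t * Real.cos (γ t) * Real.sin (ψ t) > D t / m ∧ D t / m > 0 :=
  energy_gain_requires_wind_shear_general m g hm hg z V γ ψ W D hz hV hzdot hVdot t hD hVpos hgain
end
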